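/- The function θ_Δ(τ) = η(τ)²/η(τ/2) satisfies the transformation law θ_Δ(τ/(2τ+1)) = (2τ+1)^{1/2} θ_Δ(τ) for all τ in the upper half-plane, where the square root is taken with the principal branch. -/

import Mathlib

open Complex Real

/-- The Dedekind eta function `η(τ) = e^{πiτ/12} ∏_{n≥1} (1 - e^{2πinτ})`. -/
noncomputable def dedekindEta (τ : ℂ) : ℂ :=
  Complex.exp (π * Complex.I * τ / 12) *
    ∏' n : ℕ, (1 - Complex.exp (2 * π * Complex.I * ((n : ℂ) + 1) * τ))

/-- `θ_Δ(τ) = η(τ)²/η(τ/2)`. -/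
noncomputable def thetaTriangle (τ : ℂ) : ℂ :=
  dedekindEta τ ^ 2 / dedekindEta (τ / 2)

/-!
Since `σ = τ/(2τ+1)` satisfies `σ/2 = (τ/2)/(4·(τ/2)+1)`, both `η(σ)` and `η(σ/2)` are instances
of the law `η(z/(kz+1)) = e^{-πik/12} (kz+1)^{1/2} η(z)`, obtained from `z ↦ z/(kz+1) = S T^{-k} S`
and the transformations of `η` under `S` and `T`. In `η(σ)²/η(σ/2)` the roots of unity
`(e^{-πi/6})²` and `e^{-πi/3}` cancel, leaving `((2τ+1)^{1/2})² / (2τ+1)^{1/2}`.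
-/

open ModularForm

namespace Complex

lemma mul_cpow_of_arg_add_mem_Ioc {a b : ℂ} (ha : a ≠ 0) (hb : b ≠ 0)
    (h : arg a + arg b ∈ Set.Ioc (-π) π) (x : ℂ) : (a * b) ^ x = a ^ x * b ^ x := by
  simp only [cpow_def, ha, hb, mul_ne_zero ha hb, if_false, log_mul ha hb h, add_mul, exp_add]

lemma mul_cpow_of_re_pos {a b : ℂ} (ha : 0 < a.re) (hb : 0 < b.re) (x : ℂ) :
    (a * b) ^ x = a ^ x * b ^ x := by
  have ha' := abs_lt.1 (abs_arg_lt_pi_div_two_iff.2 (Or.inl ha))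
  have hb' := abs_lt.1 (abs_arg_lt_pi_div_two_iff.2 (Or.inl hb))
  exact mul_cpow_of_arg_add_mem_Ioc (fun h => by simp [h] at ha) (fun h => by simp [h] at hb)
    ⟨by linarith, by linarith⟩ x

end Complex

lemma dedekindEta_eq_eta : dedekindEta = η := by
  ext z
  simp only [dedekindEta, ModularForm.eta, eta_q_eq_cexp, Function.Periodic.qParam]
  congr 2
  push_cast
  ring

namespace ModularForm

lemma eta_add_intCast (z : ℂ) (n : ℤ) : η (z + n) = cexp (π * I * n / 12) * η z := by
  have hq : Function.Periodic.qParam 1 (z + n) = Function.Periodic.qParam 1 z := by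
    simp only [Function.Periodic.qParam, ofReal_one, div_one, mul_add, Complex.exp_add]
    rw [show 2 * π * I * n = n * (2 * π * I) by ring, exp_int_mul_two_pi_mul_I, mul_one]
  simp only [ModularForm.eta, eta_q, hq]
  simp only [Function.Periodic.qParam, ← mul_assoc, ← Complex.exp_add]
  congr 2
  push_cast
  ring

lemma eta_neg_inv {z : ℂ} (hz : 0 < z.im) : η (-1 / z) = (-I * z) ^ (1 / 2 : ℂ) * η z := by
  have hS := eta_comp_eq_csqrt_I_inv (show z ∈ UpperHalfPlane.upperHalfPlaneSet from hz)
  simp only [Function.comp_apply, Pi.smul_apply, Pi.mul_apply, smul_eq_mul] at hS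
  have hz0 : z ≠ 0 := fun h => by simp [h] at hz
  have harg : arg (-I) + arg z ∈ Set.Ioc (-π) π := by
    have := arg_lt_pi_iff.2 (Or.inr hz.ne')
    have := arg_nonneg_iff.2 hz.le
    rw [arg_neg_I]
    constructor <;> linarith [Real.pi_pos]
  rw [hS, mul_cpow_of_arg_add_mem_Ioc (by simp) hz0 harg, ← inv_I,
    inv_cpow _ _ (by rw [arg_I]; linarith [Real.pi_pos])]
  simp only [Complex.sqrt, one_div]
  ring

lemma eta_div_intCast_mul_add_one {z : ℂ} (hz : 0 < z.im) (k : ℤ) :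
    η (z / (k * z + 1)) = cexp (-(π * I * k / 12)) * (k * z + 1) ^ (1 / 2 : ℂ) * η z := by
  have hz0 : z ≠ 0 := fun h => by simp [h] at hz
  set w := -1 / z + (-k : ℤ) with hw
  have hw_im : 0 < w.im := by
    simpa [hw, neg_div, div_eq_mul_inv] using UpperHalfPlane.im_inv_neg_coe_pos ⟨z, hz⟩
  have hw0 : w ≠ 0 := fun h => by simp [h] at hw_im
  have hwz : w * z = -(k * z + 1) := by
    rw [hw]; field_simp; push_cast; ring
  have hσ : z / (k * z + 1) = -1 / w := by
    have hk : k * z + 1 ≠ 0 := by rw [← neg_neg (k * z + 1), ← hwz]; simp [hw0, hz0]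
    rw [div_eq_div_iff hk hw0]
    linear_combination hwz
  have hT : η w = cexp (-(π * I * k / 12)) * η (-1 / z) := by
    rw [hw, eta_add_intCast]; push_cast; ring_nf
  have hroot : (-I * w) ^ (1 / 2 : ℂ) * (-I * z) ^ (1 / 2 : ℂ) = (k * z + 1) ^ (1 / 2 : ℂ) := by
    have hw_re : 0 < (-I * w).re := by simpa using hw_im
    have hz_re : 0 < (-I * z).re := by simpa using hz
    rw [← mul_cpow_of_re_pos hw_re hz_re]
    congr 1
    linear_combination (w * z) * I_sq - hwz
  rw [hσ, eta_neg_inv hw_im, hT, eta_neg_inv hz, ← hroot]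
  ring

end ModularForm

/-- `θ_Δ(τ/(2τ+1)) = (2τ+1)^{1/2} θ_Δ(τ)` with the principal branch of the square root. -/
theorem thetaTriangle_modular (τ : ℂ) (hτ : 0 < τ.im) :
    thetaTriangle (τ / (2 * τ + 1)) = (2 * τ + 1) ^ ((1 : ℂ) / 2) * thetaTriangle τ := by
  have hτ2 : 0 < (τ / 2).im := by simpa using hτ
  have h2 : η (τ / (2 * τ + 1)) = cexp (-(π * I / 6)) * (2 * τ + 1) ^ (1 / 2 : ℂ) * η τ := by
    convert eta_div_intCast_mul_add_one hτ 2 using 3 <;> push_cast <;> ring_nf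
  have h4 : η (τ / (2 * τ + 1) / 2) =
      cexp (-(π * I / 3)) * (2 * τ + 1) ^ (1 / 2 : ℂ) * η (τ / 2) := by
    rw [show τ / (2 * τ + 1) / 2 = τ / 2 / ((4 : ℤ) * (τ / 2) + 1) by push_cast; ring]
    convert eta_div_intCast_mul_add_one hτ2 4 using 3 <;> push_cast <;> ring_nf
  have hroot : (2 * τ + 1) ^ (1 / 2 : ℂ) ≠ 0 := by
    refine (cpow_ne_zero_iff_of_exponent_ne_zero (by norm_num)).2 fun h => ?_
    simpa [hτ.ne'] using congrArg Complex.im h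
  simp only [thetaTriangle, dedekindEta_eq_eta, h2, h4]
  field_simp [eta_ne_zero hτ2]
  rw [← Complex.exp_nat_mul]
  push_cast
  ring_nf
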